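/- Let ℛ and 𝒮 be linear growing TRSs over 𝓕 and let 𝒟'(ℛ,𝒮) be the powerset-pair automaton built from 𝒞'_{RS_{𝒮°}}(ℛ). Let s ∈ 𝒯(𝓕) and let P ⊆ ⋃_{p ∈ ℛ(s)} s[(s|_p)°]_p↓ be a set of states such that P ∩ s[(s|_p)°]_p↓ ≠ ∅ for every redex position p ∈ ℛ(s). Then s →_{Γ_{𝒟'}}* [S,P] where S = s↓. -/

import Mathlib

set_option maxHeartbeats 1000000

/-! ## Terms over a signature -/

/-- Terms over a signature given by a type `F` of function symbols together with
an arity function `ar`; variables are natural numbers. -/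
inductive Term (F : Type) (ar : F → ℕ) : Type
  | var : ℕ → Term F ar
  | app : (f : F) → (Fin (ar f) → Term F ar) → Term F ar

namespace Term

variable {F : Type} {ar : F → ℕ}

/-- The (finite) set of variables of a term. -/
def vars : Term F ar → Finset ℕ
  | var n => {n}
  | app _ ts => Finset.univ.biUnion fun i => (ts i).vars

/-- A term is ground if it contains no variables. -/
def Ground (t : Term F ar) : Prop := t.vars = ∅

/-- The number of occurrences of the variable `n` in a term. -/
def count (n : ℕ) : Term F ar → ℕ
  | var m => if m = n then 1 else 0
  | app _ ts => ∑ i, (ts i).count n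

/-- A term is linear if no variable occurs twice in it. -/
def Linear (t : Term F ar) : Prop := ∀ n, t.count n ≤ 1

/-- Applying a substitution to a term. -/
def subst (σ : ℕ → Term F ar) : Term F ar → Term F ar
  | var n => σ n
  | app f ts => app f fun i => (ts i).subst σ

/-- The subterm at a position (a list of argument indices), if the position is valid. -/
def subtermAt : Term F ar → List ℕ → Option (Term F ar)
  | t, [] => some t
  | var _, _ :: _ => none
  | app f ts, i :: p => if h : i < ar f then (ts ⟨i, h⟩).subtermAt p else none

/-- Replacing the subterm at a position, if the position is valid. -/
def replaceAt : Term F ar → List ℕ → Term F ar → Option (Term F ar)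
  | _, [], u => some u
  | var _, _ :: _, _ => none
  | app f ts, i :: p, u =>
      if h : i < ar f then
        ((ts ⟨i, h⟩).replaceAt p u).map fun s => app f (Function.update ts ⟨i, h⟩ s)
      else none

/-- `s.IsSubtermOf t` : `s` is a subterm of `t`. -/
def IsSubtermOf (s t : Term F ar) : Prop := ∃ p, t.subtermAt p = some s

/-- Relabelling of function symbols along an arity-preserving map of signatures. -/
def relabel {G : Type} {arG : G → ℕ} (φ : F → G) (h : ∀ f, arG (φ f) = ar f) :
    Term F ar → Term G arG
  | var n => var n
  | app f ts => app (φ f) fun i => (ts (Fin.cast (h f) i)).relabel φ h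

end Term

/-! ## Rewriting -/

/-- One-step rewriting with a set of rewrite rules: there are a position `p` of `s`,
a rule `(l, r)` and a substitution `σ` with `s|_p = lσ` and `t = s[rσ]_p`. -/
def Rewrites {F : Type} {ar : F → ℕ} (R : Set (Term F ar × Term F ar))
    (s t : Term F ar) : Prop :=
  ∃ (p : List ℕ) (l r : Term F ar) (σ : ℕ → Term F ar),
    (l, r) ∈ R ∧ s.subtermAt p = some (l.subst σ) ∧ s.replaceAt p (r.subst σ) = some t

/-- Many-step rewriting (reflexive–transitive closure). -/
abbrev RewritesStar {F : Type} {ar : F → ℕ} (R : Set (Term F ar × Term F ar)) :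
    Term F ar → Term F ar → Prop :=
  Relation.ReflTransGen (Rewrites R)

/-- A term rewriting system: a finite set of rules whose left-hand sides are not variables. -/
structure TRS (F : Type) (ar : F → ℕ) where
  rules : Set (Term F ar × Term F ar)
  finite : rules.Finite
  lhs_not_var : ∀ lr ∈ rules, ∀ n, lr.1 ≠ Term.var n

namespace TRS

variable {F : Type} {ar : F → ℕ}

def LeftLinear (R : TRS F ar) : Prop := ∀ lr ∈ R.rules, lr.1.Linear

def RightLinear (R : TRS F ar) : Prop := ∀ lr ∈ R.rules, lr.2.Linear

/-- A TRS is linear if all left- and right-hand sides are linear terms. -/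
def IsLinear (R : TRS F ar) : Prop := R.LeftLinear ∧ R.RightLinear

/-- A TRS is growing if every variable occurring both in the left- and the right-hand
side of a rule occurs at depth 1 in the left-hand side. -/
def Growing (R : TRS F ar) : Prop :=
  ∀ lr ∈ R.rules, ∀ n ∈ lr.1.vars, n ∈ lr.2.vars →
    ∀ (f : F) (ts : Fin (ar f) → Term F ar), lr.1 = Term.app f ts →
      ∀ i, n ∈ (ts i).vars → ts i = Term.var n

/-- A redex is an instance of a left-hand side. -/
def IsRedex (R : TRS F ar) (s : Term F ar) : Prop :=
  ∃ lr ∈ R.rules, ∃ σ : ℕ → Term F ar, s = lr.1.subst σ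

/-- `p` is a redex position of `s`. -/
def RedexPos (R : TRS F ar) (s : Term F ar) (p : List ℕ) : Prop :=
  ∃ u, s.subtermAt p = some u ∧ R.IsRedex u

def Reducible (R : TRS F ar) (s : Term F ar) : Prop := ∃ p, R.RedexPos s p

/-- A term is root-stable if it cannot be rewritten to a redex. -/
def RootStable (R : TRS F ar) (s : Term F ar) : Prop :=
  ¬ ∃ t, RewritesStar R.rules s t ∧ R.IsRedex t

/-- Ground normal forms. -/
def NFset (R : TRS F ar) : Set (Term F ar) := { t | t.Ground ∧ ¬ R.Reducible t }

/-- Ground redexes. -/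
def RedexSet (R : TRS F ar) : Set (Term F ar) := { t | t.Ground ∧ R.IsRedex t }

/-- Root-stable ground terms. -/
def RSset (R : TRS F ar) : Set (Term F ar) := { t | t.Ground ∧ R.RootStable t }

/-- Relabelling a TRS along an arity-preserving map of signatures. -/
def relabel {G : Type} {arG : G → ℕ} (R : TRS F ar) (φ : F → G)
    (h : ∀ f, arG (φ f) = ar f) : TRS G arG where
  rules := (fun lr => (lr.1.relabel φ h, lr.2.relabel φ h)) '' R.rules
  finite := R.finite.image _
  lhs_not_var := by
    rintro lr ⟨lr0, h0, rfl⟩ n hn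
    dsimp only at hn
    cases h1 : lr0.1 with
    | var m => exact absurd h1 (R.lhs_not_var lr0 h0 m)
    | app f ts =>
        rw [h1] at hn
        simp only [Term.relabel] at hn
        cases hn

end TRS

/-! ## Tree automata -/

/-- A transition rule `f(q₁,…,qₙ) → q` of a bottom-up tree automaton. -/
abbrev TARule (F : Type) (ar : F → ℕ) (Q : Type) : Type :=
  (f : F) × ((Fin (ar f) → Q) × Q)

/-- A (finite bottom-up) tree automaton without ε-transitions. -/
structure TreeAutomaton (F : Type) (ar : F → ℕ) (Q : Type) where
  trans : Set (TARule F ar Q)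
  final : Set Q

/-- `Reaches Δ t q` : the ground term `t` rewrites to the state `q` using the
transition rules `Δ`. -/
inductive Reaches {F : Type} {ar : F → ℕ} {Q : Type} (Δ : Set (TARule F ar Q)) :
    Term F ar → Q → Prop
  | app {f : F} {ts : Fin (ar f) → Term F ar} {qs : Fin (ar f) → Q} {q : Q} :
      (∀ i, Reaches Δ (ts i) (qs i)) → (⟨f, qs, q⟩ : TARule F ar Q) ∈ Δ →
      Reaches Δ (Term.app f ts) q

/-- `ReachesT Δ θ t q` : the term `t`, whose variables are interpreted as the states
given by `θ`, rewrites to the state `q` using the transition rules `Δ`. -/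
inductive ReachesT {F : Type} {ar : F → ℕ} {Q : Type} (Δ : Set (TARule F ar Q))
    (θ : ℕ → Q) : Term F ar → Q → Prop
  | var (n : ℕ) : ReachesT Δ θ (Term.var n) (θ n)
  | app {f : F} {ts : Fin (ar f) → Term F ar} {qs : Fin (ar f) → Q} {q : Q} :
      (∀ i, ReachesT Δ θ (ts i) (qs i)) → (⟨f, qs, q⟩ : TARule F ar Q) ∈ Δ →
      ReachesT Δ θ (Term.app f ts) q

/-- The language of a tree automaton: all ground terms reaching a final state. -/
def Lang {F : Type} {ar : F → ℕ} {Q : Type} (A : TreeAutomaton F ar Q) :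
    Set (Term F ar) :=
  { t | t.Ground ∧ ∃ q ∈ A.final, Reaches A.trans t q }

/-- A set of ground terms is recognizable if it is the language of some finite
tree automaton. -/
def Recognizable {F : Type} {ar : F → ℕ} (T : Set (Term F ar)) : Prop :=
  ∃ (Q : Type) (_ : Fintype Q) (A : TreeAutomaton F ar Q), T = Lang A

/-- The set of states occurring in a set of transition rules. -/
def statesOf {F : Type} {ar : F → ℕ} {Q : Type} (Γ : Set (TARule F ar Q)) : Set Q :=
  { q | ∃ ρ ∈ Γ, ρ.2.2 = q ∨ ∃ i, ρ.2.1 i = q }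

/-! ## The automaton `ℬ(ℛ)` -/

/-- The canonical representative of the state `⟨t⟩` of `ℬ(ℛ)`: all variables are
identified with the single state `⟨x⟩`, represented by `var 0`. -/
def stPattern {F : Type} {ar : F → ℕ} : Term F ar → Term F ar
  | Term.var _ => Term.var 0
  | Term.app f ts => Term.app f ts

/-- `S_ℛ`: the set of all subterms of arguments of left-hand sides of `ℛ`. -/
def SR {F : Type} {ar : F → ℕ} (R : TRS F ar) : Set (Term F ar) :=
  { s | ∃ lr ∈ R.rules, ∃ (f : F) (ts : Fin (ar f) → Term F ar),
        lr.1 = Term.app f ts ∧ ∃ i, s.IsSubtermOf (ts i) }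

/-- The representatives of the states of `ℬ(ℛ)`: the patterns of terms of `S_ℛ`,
together with `⟨x⟩`. -/
def BStateSet {F : Type} {ar : F → ℕ} (R : TRS F ar) : Set (Term F ar) :=
  stPattern '' SR R ∪ {Term.var 0}

/-- The matching rules of `ℬ(ℛ)` (with states encoded by `enc`):
`f(⟨t₁⟩,…,⟨tₙ⟩) → ⟨t⟩` for every `t = f(t₁,…,tₙ) ∈ S_ℛ`. -/
def BMatch {F : Type} {ar : F → ℕ} {Q : Type} (R : TRS F ar) (enc : Term F ar → Q) :
    Set (TARule F ar Q) :=
  { ρ | ∃ (f : F) (ts : Fin (ar f) → Term F ar), Term.app f ts ∈ SR R ∧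
        ρ = ⟨f, fun i => enc (stPattern (ts i)), enc (Term.app f ts)⟩ }

/-- The propagation rules `f(⟨x⟩,…,⟨x⟩) → ⟨x⟩` for every function symbol `f`. -/
def BProp {F : Type} {ar : F → ℕ} {Q : Type} (enc : Term F ar → Q) :
    Set (TARule F ar Q) :=
  { ρ | ∃ f : F, ρ = ⟨f, fun _ => enc (Term.var 0), enc (Term.var 0)⟩ }

/-- The transition rules of the automaton `ℬ(ℛ)`. -/
def BTrans {F : Type} {ar : F → ℕ} {Q : Type} (R : TRS F ar) (enc : Term F ar → Q) :
    Set (TARule F ar Q) :=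
  BMatch R enc ∪ BProp enc

/-- `Σ(t)`: the set of ground instances of the term `t`. -/
def GInst {F : Type} {ar : F → ℕ} (t : Term F ar) : Set (Term F ar) :=
  { s | s.Ground ∧ ∃ σ, s = t.subst σ }

/-! ## Saturation -/

/-- The state `qᵢ` associated to the argument `lᵢ` of a left-hand side in the
saturation rule: `lᵢθ` if `lᵢ` is a variable occurring in `r` (whose variable set
is `rv`), and `⟨lᵢ⟩` otherwise. -/
def satArg {F : Type} {ar : F → ℕ} {Q : Type} (enc : Term F ar → Q) (θ : ℕ → Q)
    (rv : Finset ℕ) : Term F ar → Q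
  | Term.var n => if n ∈ rv then θ n else enc (Term.var 0)
  | Term.app f ts => enc (Term.app f ts)

/-- One step of the saturation process: add all transition rules `f(q₁,…,qₙ) → q`
obtained from a rewrite rule `f(l₁,…,lₙ) → r` and a state substitution `θ`
(with values among the states `Qc` of the automaton) such that `rθ →_Γ* q`. -/
def satStep {F : Type} {ar : F → ℕ} {Q : Type} (R : TRS F ar) (enc : Term F ar → Q)
    (Qc : Set Q) (Γ : Set (TARule F ar Q)) : Set (TARule F ar Q) :=
  Γ ∪ { ρ | ∃ (f : F) (ls : Fin (ar f) → Term F ar) (r : Term F ar) (θ : ℕ → Q) (q : Q),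
        (Term.app f ls, r) ∈ R.rules ∧ (∀ n ∈ r.vars, θ n ∈ Qc) ∧ ReachesT Γ θ r q ∧
        ρ = ⟨f, fun i => satArg enc θ r.vars (ls i), q⟩ }

/-- The saturated set of transition rules: the closure of `Γ0` under the saturation
inference rule. -/
def satGamma {F : Type} {ar : F → ℕ} {Q : Type} (R : TRS F ar) (enc : Term F ar → Q)
    (Qc : Set Q) (Γ0 : Set (TARule F ar Q)) : Set (TARule F ar Q) :=
  ⋃ n, (satStep R enc Qc)^[n] Γ0

/-! ## The automaton `𝒞_T(ℛ)` and its extension `𝒞'_T(ℛ)` -/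

/-- The data of the construction of the automaton `𝒞_T(ℛ)`: an automaton `𝒜_T`
recognizing `T` with all states accessible and state set `QA`, together with an
encoding `enc` of the states `⟨t⟩` of `ℬ(ℛ)` into the common state type `Q`, such
that every state common to `𝒜_T` and `ℬ(ℛ)` accepts the same set of terms in both
automata. -/
structure CSetup {G : Type} [Fintype G] {arG : G → ℕ} (Q : Type) [Fintype Q]
    (Rg : TRS G arG) (T : Set (Term G arG)) where
  enc : Term G arG → Q
  A : TreeAutomaton G arG Q
  QA : Set Q
  henc : Set.InjOn enc (BStateSet Rg)
  hAstates : ∀ ρ ∈ A.trans, ρ.2.2 ∈ QA ∧ ∀ i, ρ.2.1 i ∈ QA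
  hfinal : A.final ⊆ QA
  hacc : ∀ q ∈ QA, ∃ s : Term G arG, s.Ground ∧ Reaches A.trans s q
  hground : ∃ s : Term G arG, s.Ground
  hshared : ∀ q ∈ QA ∩ enc '' BStateSet Rg, ∀ s : Term G arG,
      Reaches A.trans s q ↔ Reaches (BTrans Rg enc) s q
  hT : T = Lang A

namespace CSetup

variable {G : Type} [Fintype G] {arG : G → ℕ} {Q : Type} [Fintype Q]
  {Rg : TRS G arG} {T : Set (Term G arG)}

/-- The set of states of the automaton `𝒞_T(ℛ)`. -/
def Qstates (C : CSetup Q Rg T) : Set Q := C.QA ∪ C.enc '' BStateSet Rg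

/-- The transition rules of `𝒞_T(ℛ)` before saturation: the union of `𝒜_T` and `ℬ(ℛ)`. -/
def Γ0 (C : CSetup Q Rg T) : Set (TARule G arG Q) := C.A.trans ∪ BTrans Rg C.enc

/-- The transition rules of `𝒞_T(ℛ)` after saturation. -/
def Γsat (C : CSetup Q Rg T) : Set (TARule G arG Q) :=
  satGamma Rg C.enc C.Qstates C.Γ0

end CSetup

/-- The redex rules `f(⟪l₁⟫,…,⟪lₙ⟫) → q_r` for every left-hand side `f(l₁,…,lₙ)`. -/
def RedexRules {F : Type} {ar : F → ℕ} {Q : Type} (R : TRS F ar)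
    (enc2 : Term F ar → Q) (qr : Q) : Set (TARule F ar Q) :=
  { ρ | ∃ (f : F) (ls : Fin (ar f) → Term F ar) (r : Term F ar),
        (Term.app f ls, r) ∈ R.rules ∧
        ρ = ⟨f, fun i => enc2 (stPattern (ls i)), qr⟩ }

/-- The rules `f(⟨x⟩,…,q_r,…,⟨x⟩) → q_r`. -/
def QrProp {F : Type} {ar : F → ℕ} {Q : Type} (enc : Term F ar → Q) (qr : Q) :
    Set (TARule F ar Q) :=
  { ρ | ∃ (f : F) (j : Fin (ar f)),
        ρ = ⟨f, fun i => if i = j then qr else enc (Term.var 0), qr⟩ }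

/-- The data of the construction of the automaton `𝒞'_T(ℛ)`: `𝒞_T(ℛ)` extended with
a fresh copy `⟪t⟫` (encoded by `enc2`, with `⟪x⟫ = ⟨x⟩`) of the states of `ℬ(ℛ)` and
a fresh state `q_r`. -/
structure CpSetup {G : Type} [Fintype G] {arG : G → ℕ} (Q : Type) [Fintype Q]
    (Rg : TRS G arG) (T : Set (Term G arG)) extends CSetup Q Rg T where
  enc2 : Term G arG → Q
  qr : Q
  henc2 : Set.InjOn enc2 (BStateSet Rg)
  hx : enc2 (Term.var 0) = enc (Term.var 0)
  hfresh : (enc2 '' (BStateSet Rg \ {Term.var 0}) ∪ {qr}) ∩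
              (QA ∪ enc '' BStateSet Rg) = ∅
  hqr : qr ∉ enc2 '' (BStateSet Rg \ {Term.var 0})

namespace CpSetup

variable {G : Type} [Fintype G] {arG : G → ℕ} {Q : Type} [Fintype Q]
  {Rg : TRS G arG} {T : Set (Term G arG)}

/-- The transition rules `Γ'` of the automaton `𝒞'_T(ℛ)`. -/
def Γ' (C : CpSetup Q Rg T) : Set (TARule G arG Q) :=
  C.toCSetup.Γsat ∪ BMatch Rg C.enc2 ∪ RedexRules Rg C.enc2 C.qr ∪ QrProp C.enc C.qr

end CpSetup

/-! ## The signature `𝓖 = 𝓕 ∪ {•}` -/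

/-- The arity function of the extended signature `𝓕 ∪ {•}` (with `•` the fresh
constant `none`). -/
def arB {F : Type} (ar : F → ℕ) : Option F → ℕ
  | none => 0
  | some f => ar f

/-- The term `•`. -/
def bulletTm {F : Type} {ar : F → ℕ} : Term (Option F) (arB ar) :=
  Term.app none Fin.elim0

/-- The embedding of `𝒯(𝓕)`-terms into terms over `𝓕 ∪ {•}`. -/
def liftB {F : Type} {ar : F → ℕ} : Term F ar → Term (Option F) (arB ar) :=
  Term.relabel some (fun _ => rfl)

/-- A TRS over `𝓕` viewed as a TRS over `𝓕 ∪ {•}`. -/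
def TRS.liftB {F : Type} {ar : F → ℕ} (R : TRS F ar) : TRS (Option F) (arB ar) :=
  R.relabel some (fun _ => rfl)

/-- The TRS `ℛ• = ℛ ∪ {• → •}` over the signature `𝓕 ∪ {•}`. -/
def TRS.bullet {F : Type} {ar : F → ℕ} (R : TRS F ar) : TRS (Option F) (arB ar) where
  rules := R.liftB.rules ∪ {(bulletTm, bulletTm)}
  finite := R.liftB.finite.union (Set.finite_singleton _)
  lhs_not_var := by
    rintro lr (h | h) n hn
    · exact R.liftB.lhs_not_var lr h n hn
    · rw [Set.mem_singleton_iff] at h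
      rw [h] at hn
      cases hn

/-! ## The automaton `𝒟(ℛ)` -/

/-- For a symbol `g` and sets of states `Ss` for the arguments, the set
`g(S₁,…,Sₙ)↓` of states reachable from `g` applied to states chosen from the `Ssᵢ`. -/
def oneStep {G : Type} {arG : G → ℕ} {Q : Type} (Γ : Set (TARule G arG Q)) (g : G)
    (Ss : Fin (arG g) → Set Q) : Set Q :=
  { q | ∃ qs : Fin (arG g) → Q, (∀ i, qs i ∈ Ss i) ∧ (⟨g, qs, q⟩ : TARule G arG Q) ∈ Γ }

/-- `t↓` for a ground term `t`: the set of states reachable from `t`. -/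
def dn {G : Type} {arG : G → ℕ} {Q : Type} (Γ : Set (TARule G arG Q))
    (t : Term G arG) : Set Q :=
  { q | Reaches Γ t q }

/-- There is a rewrite rule with left-hand side `g(l₁,…,lₙ)` such that
`⟪lᵢ⟫ ∈ Ssᵢ` for all `i`. -/
def LhsMatch {G : Type} {arG : G → ℕ} {Q : Type} (Rg : TRS G arG)
    (enc2 : Term G arG → Q) (g : G) (Ss : Fin (arG g) → Set Q) : Prop :=
  ∃ (ls : Fin (arG g) → Term G arG) (r : Term G arG),
    (Term.app g ls, r) ∈ Rg.rules ∧ ∀ i, enc2 (stPattern (ls i)) ∈ Ss i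

/-- The transition rules of the automaton `𝒟(ℛ)` over `𝓕`, built from the transition
rules `Γ'` of `𝒞'_{NF}(ℛ)` over `𝓕 ∪ {•}`. -/
def DTrans {F : Type} {ar : F → ℕ} {Q : Type} (Rb : TRS (Option F) (arB ar))
    (Γ' : Set (TARule (Option F) (arB ar) Q))
    (enc enc2 : Term (Option F) (arB ar) → Q) :
    Set (TARule F ar (Set Q × Set Q)) :=
  { ρ | ∃ (f : F) (SP : Fin (ar f) → Set Q × Set Q) (P1 P2 : Set Q),
      P1 ⊆ (⋃ i : Fin (ar f), oneStep Γ' (some f)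
              (fun (j : Fin (ar f)) => if j = i then (SP j).2 else (SP j).1)) ∧
      (∀ (i : Fin (ar f)), ∀ q ∈ (SP i).2,
        (P1 ∩ oneStep Γ' (some f) (fun (j : Fin (ar f)) => if j = i then {q} else (SP j).1)).Nonempty) ∧
      ((LhsMatch Rb enc2 (some f) (fun i => (SP i).1) ∧ P2 = {enc (Term.var 0)}) ∨
       (¬ LhsMatch Rb enc2 (some f) (fun i => (SP i).1) ∧ P2 = (∅ : Set Q))) ∧
      ρ = ⟨f, SP, (oneStep Γ' (some f) (fun i => (SP i).1), P1 ∪ P2)⟩ }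

/-- The automaton `𝒟(ℛ)`: final states are the pairs `[S,P]` with `q_r ∈ S` and
`P ⊆ Q_f`. -/
def DAutomaton {F : Type} {ar : F → ℕ} {Q : Type} (Rb : TRS (Option F) (arB ar))
    (Γ' : Set (TARule (Option F) (arB ar) Q))
    (enc enc2 : Term (Option F) (arB ar) → Q) (qr : Q) (Qf : Set Q) :
    TreeAutomaton F ar (Set Q × Set Q) where
  trans := DTrans Rb Γ' enc enc2
  final := { SP | qr ∈ SP.1 ∧ SP.2 ⊆ Qf }

/-! ## Growing approximations -/

/-- `VarRepl t t'` : `t'` is obtained from `t` by replacing occurrences of variables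
by (possibly other) variables. -/
inductive VarRepl {F : Type} {ar : F → ℕ} : Term F ar → Term F ar → Prop
  | var (n m : ℕ) : VarRepl (Term.var n) (Term.var m)
  | app (f : F) (ts ts' : Fin (ar f) → Term F ar) :
      (∀ i, VarRepl (ts i) (ts' i)) → VarRepl (Term.app f ts) (Term.app f ts')

/-- `Rg` is a growing approximation of `R`: a right-linear growing TRS obtained from
`R` by replacing, in each right-hand side, occurrences of variables by variables not
occurring in the corresponding left-hand side. -/
def IsGrowingApprox {F : Type} {ar : F → ℕ} (R Rg : TRS F ar) : Prop :=
  Rg.RightLinear ∧ Rg.Growing ∧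
  (∀ lr ∈ Rg.rules, ∃ lr' ∈ R.rules, lr.1 = lr'.1 ∧ VarRepl lr'.2 lr.2 ∧
      ∀ n ∈ lr.2.vars, n ∉ lr.1.vars) ∧
  (∀ lr ∈ R.rules, ∃ lr' ∈ Rg.rules, lr.1 = lr'.1 ∧ VarRepl lr.2 lr'.2 ∧
      ∀ n ∈ lr'.2.vars, n ∉ lr'.1.vars)

/-! ## The signature `𝓖 = 𝓕 ∪ {f° : f ∈ 𝓕}` -/

/-- The arity function of the signature `𝓕 ∪ {f° : f ∈ 𝓕}` (`inl f` is `f`,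
`inr f` is `f°`). -/
def arC {F : Type} (ar : F → ℕ) : F ⊕ F → ℕ
  | Sum.inl f => ar f
  | Sum.inr f => ar f

/-- The embedding of `𝒯(𝓕)`-terms into terms over `𝓕 ∪ {f° : f ∈ 𝓕}`. -/
def liftC {F : Type} {ar : F → ℕ} : Term F ar → Term (F ⊕ F) (arC ar) :=
  Term.relabel Sum.inl (fun _ => rfl)

/-- `t°`: mark the root symbol of `t`. -/
def circTm {F : Type} {ar : F → ℕ} : Term F ar → Term (F ⊕ F) (arC ar)
  | Term.var n => Term.var n
  | Term.app f ts => Term.app (Sum.inr f) fun i => liftC (ts i)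

/-- A TRS over `𝓕` viewed as a TRS over `𝓕 ∪ {f° : f ∈ 𝓕}`. -/
def TRS.liftC {F : Type} {ar : F → ℕ} (R : TRS F ar) : TRS (F ⊕ F) (arC ar) :=
  R.relabel Sum.inl (fun _ => rfl)

/-- The TRS `𝒮° = 𝒮 ∪ {l° → r | l → r ∈ 𝒮}` over the signature `𝓕 ∪ {f° : f ∈ 𝓕}`. -/
def TRS.circ {F : Type} {ar : F → ℕ} (S : TRS F ar) : TRS (F ⊕ F) (arC ar) where
  rules := S.liftC.rules ∪ (fun lr => (circTm lr.1, _root_.liftC lr.2)) '' S.rules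
  finite := S.liftC.finite.union (S.finite.image _)
  lhs_not_var := by
    rintro lr (h | ⟨lr0, h0, rfl⟩) n hn
    · exact S.liftC.lhs_not_var lr h n hn
    · dsimp only at hn
      cases h1 : lr0.1 with
      | var m => exact absurd h1 (S.lhs_not_var lr0 h0 m)
      | app f ts =>
          rw [h1] at hn
          simp only [circTm] at hn
          cases hn

/-- The transitions added to `ℬ(𝒮°)` to obtain `𝒜_{REDEX_{𝒮°}}`:
`f(⟨l₁⟩,…,⟨lₙ⟩) → q_f` and `f°(⟨l₁⟩,…,⟨lₙ⟩) → q_f` for each left-hand side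
`f(l₁,…,lₙ)` of a rule of `𝒮`. -/
def CircRedexRules {F : Type} {ar : F → ℕ} {Q : Type} (S : TRS F ar)
    (enc : Term (F ⊕ F) (arC ar) → Q) (qf : Q) : Set (TARule (F ⊕ F) (arC ar) Q) :=
  { ρ | ∃ (f : F) (ls : Fin (ar f) → Term F ar) (r : Term F ar),
      (Term.app f ls, r) ∈ S.rules ∧
      (ρ = ⟨Sum.inl f, fun i => enc (stPattern (liftC (ls i))), qf⟩ ∨
       ρ = ⟨Sum.inr f, fun i => enc (stPattern (liftC (ls i))), qf⟩) }

/-! ## The automaton `𝒟'(ℛ,𝒮)` -/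

/-- The data of the construction of `𝒞'_{RS_{𝒮°}}(ℛ)`: the saturated automaton
`𝒞_{RS_{𝒮°}}(ℛ)`, a fresh copy `⟪t⟫` (encoded by `enc2`, with `⟪x⟫ = ⟨x⟩`) of the
states of `ℬ(ℛ)`, and an automaton `𝒞_{REDEX_𝒮}(𝒮)` (transitions `Etrans`, final
states `Qf'`) recognizing the non-`𝒮`-root-stable ground terms of `𝒯(𝓕)`. -/
structure CrsSetup {F : Type} [Fintype F] {ar : F → ℕ} (Q : Type) [Fintype Q]
    (R S : TRS F ar) extends CSetup Q R.liftC (TRS.RSset S.circ) where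
  enc2 : Term (F ⊕ F) (arC ar) → Q
  henc2 : Set.InjOn enc2 (BStateSet R.liftC)
  hx : enc2 (Term.var 0) = enc (Term.var 0)
  hfresh2 : (enc2 '' (BStateSet R.liftC \ {Term.var 0})) ∩
              (QA ∪ enc '' BStateSet R.liftC) = ∅
  Etrans : Set (TARule (F ⊕ F) (arC ar) Q)
  Qf' : Set Q
  hQf' : Qf' ⊆ statesOf Etrans
  hEfresh : statesOf Etrans ∩
      (QA ∪ enc '' BStateSet R.liftC ∪ enc2 '' (BStateSet R.liftC \ {Term.var 0})) = ∅
  hE : ∀ t : Term (F ⊕ F) (arC ar),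
      (t.Ground ∧ ∃ q ∈ Qf', Reaches Etrans t q) ↔
      (∃ s : Term F ar, t = liftC s ∧ s.Ground ∧ ¬ S.RootStable s)

namespace CrsSetup

variable {F : Type} [Fintype F] {ar : F → ℕ} {Q : Type} [Fintype Q] {R S : TRS F ar}

/-- The transition rules `Γ'` of the automaton `𝒞'_{RS_{𝒮°}}(ℛ)`. -/
def Γ' (C : CrsSetup Q R S) : Set (TARule (F ⊕ F) (arC ar) Q) :=
  C.toCSetup.Γsat ∪ BMatch R.liftC C.enc2 ∪ C.Etrans

end CrsSetup

/-- The transition rules of the automaton `𝒟'(ℛ,𝒮)` over `𝓕`, built from the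
transition rules `Γ'` of `𝒞'_{RS_{𝒮°}}(ℛ)`. -/
def DTransRS {F : Type} {ar : F → ℕ} {Q : Type} (Rg : TRS (F ⊕ F) (arC ar))
    (Γ' : Set (TARule (F ⊕ F) (arC ar) Q)) (enc2 : Term (F ⊕ F) (arC ar) → Q) :
    Set (TARule F ar (Set Q × Set Q)) :=
  { ρ | ∃ (f : F) (SP : Fin (ar f) → Set Q × Set Q) (P1 P2 : Set Q),
      P1 ⊆ (⋃ i : Fin (ar f), oneStep Γ' (Sum.inl f)
              (fun (j : Fin (ar f)) => if j = i then (SP j).2 else (SP j).1)) ∧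
      (∀ (i : Fin (ar f)), ∀ q ∈ (SP i).2,
        (P1 ∩ oneStep Γ' (Sum.inl f) (fun (j : Fin (ar f)) => if j = i then {q} else (SP j).1)).Nonempty) ∧
      ((LhsMatch Rg enc2 (Sum.inl f) (fun i => (SP i).1) ∧ P2.Nonempty ∧
          P2 ⊆ oneStep Γ' (Sum.inr f) (fun i => (SP i).1)) ∨
       (¬ LhsMatch Rg enc2 (Sum.inl f) (fun i => (SP i).1) ∧ P2 = (∅ : Set Q))) ∧
      ρ = ⟨f, SP, (oneStep Γ' (Sum.inl f) (fun i => (SP i).1), P1 ∪ P2)⟩ }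

/-- The automaton `𝒟'(ℛ,𝒮)`: final states are the pairs `[S,P]` with
`S ∩ Q_f' ≠ ∅` and `P ⊆ Q_f`. -/
def DAutomatonRS {F : Type} {ar : F → ℕ} {Q : Type} (Rg : TRS (F ⊕ F) (arC ar))
    (Γ' : Set (TARule (F ⊕ F) (arC ar) Q)) (enc2 : Term (F ⊕ F) (arC ar) → Q)
    (Qf' Qf : Set Q) : TreeAutomaton F ar (Set Q × Set Q) where
  trans := DTransRS Rg Γ' enc2
  final := { SP | (SP.1 ∩ Qf').Nonempty ∧ SP.2 ⊆ Qf }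

/-!
Induction on `s = f(t₁,…,tₙ)`. A state of `s[(s|_p)°]_p↓` for a redex position `p = i·p'` below
the root is a state of `f(S₁,…,{a},…,Sₙ)↓` for some `a ∈ tᵢ[(tᵢ|_{p'})°]_{p'}↓`; the set `Pᵢ` of
those `a` that contribute to `P` satisfies the hypotheses for `tᵢ`, so `tᵢ →* [Sᵢ,Pᵢ]`. The
states of `P` coming from the root position form `P²`. The rule `f([S₁,P₁],…,[Sₙ,Pₙ]) → [S,P]`
is in `Γ_{𝒟'}` because, by left-linearity of `ℛ` and freshness of the states `⟪t⟫`, the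
condition `⟪lᵢ⟫ ∈ Sᵢ` for all `i` holds exactly when `s` is an `ℛ`-redex.
-/

namespace Term

variable {F : Type} {ar : F → ℕ}

lemma not_ground_var (n : ℕ) : ¬ (var n : Term F ar).Ground := by
  simp [Ground, vars]

lemma Ground.arg {f : F} {ts : Fin (ar f) → Term F ar} (h : (app f ts).Ground)
    (i : Fin (ar f)) : (ts i).Ground :=
  Finset.subset_empty.1 (h ▸ Finset.subset_biUnion_of_mem (fun j => (ts j).vars)
    (Finset.mem_univ i))

lemma count_pos_of_mem_vars {n : ℕ} {t : Term F ar} (h : n ∈ t.vars) : 0 < t.count n := by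
  induction t with
  | var m =>
    simp only [vars, Finset.mem_singleton] at h
    simp [count, h]
  | app f ts ih =>
    simp only [vars, Finset.mem_biUnion, Finset.mem_univ, true_and] at h
    obtain ⟨i, hi⟩ := h
    exact (ih i hi).trans_le
      (Finset.single_le_sum (f := fun j => (ts j).count n) (by simp) (Finset.mem_univ i))

lemma Linear.arg {f : F} {ts : Fin (ar f) → Term F ar} (h : (app f ts).Linear)
    (i : Fin (ar f)) : (ts i).Linear := fun n =>
  (Finset.single_le_sum (f := fun j => (ts j).count n) (by simp) (Finset.mem_univ i)).trans
    (h n)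

lemma Linear.disjoint_vars {f : F} {ts : Fin (ar f) → Term F ar} (h : (app f ts).Linear)
    {i j : Fin (ar f)} (hij : i ≠ j) : Disjoint (ts i).vars (ts j).vars := by
  refine Finset.disjoint_left.2 fun n hi hj => ?_
  have h2 : (ts i).count n + (ts j).count n ≤ (app f ts).count n :=
    calc (ts i).count n + (ts j).count n
        = ∑ k ∈ {i, j}, (ts k).count n :=
          (Finset.sum_pair (f := fun k => (ts k).count n) hij).symm
      _ ≤ ∑ k, (ts k).count n := Finset.sum_le_sum_of_subset (Finset.subset_univ _)
  have := count_pos_of_mem_vars hi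
  have := count_pos_of_mem_vars hj
  have := h n
  omega

lemma subst_congr {σ σ' : ℕ → Term F ar} {t : Term F ar}
    (h : ∀ n ∈ t.vars, σ n = σ' n) : t.subst σ = t.subst σ' := by
  induction t with
  | var n => exact h n (Finset.mem_singleton_self n)
  | app f ts ih =>
    refine congrArg (app f) (funext fun i => ih i fun n hn => h n ?_)
    exact Finset.mem_biUnion.2 ⟨i, Finset.mem_univ i, hn⟩

lemma Linear.exists_subst_app {f : F} {ts ws : Fin (ar f) → Term F ar}
    (h : (app f ts).Linear) (hws : ∀ i, ∃ σ, ws i = (ts i).subst σ) :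
    ∃ σ, app f ws = (app f ts).subst σ := by
  classical
  choose σs hσs using hws
  refine ⟨fun n => if hn : ∃ i, n ∈ (ts i).vars then σs hn.choose n else var n,
    congrArg (app f) (funext fun i => (hσs i).trans (subst_congr fun n hn => ?_))⟩
  have hex : ∃ j, n ∈ (ts j).vars := ⟨i, hn⟩
  obtain rfl : hex.choose = i := by
    by_contra hne
    exact Finset.disjoint_left.1 (h.disjoint_vars hne) hex.choose_spec hn
  rw [dif_pos hex]

lemma subtermAt_nil (t : Term F ar) : t.subtermAt [] = some t := by
  cases t <;> rfl

lemma replaceAt_nil (t u : Term F ar) : t.replaceAt [] u = some u := by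
  cases t <;> rfl

lemma subtermAt_cons {f : F} {ts : Fin (ar f) → Term F ar} (i : Fin (ar f)) (p : List ℕ) :
    (app f ts).subtermAt (i.val :: p) = (ts i).subtermAt p :=
  dif_pos i.isLt

lemma subtermAt_cons_of_le {f : F} {ts : Fin (ar f) → Term F ar} {n : ℕ} (hn : ar f ≤ n)
    (p : List ℕ) : (app f ts).subtermAt (n :: p) = none :=
  dif_neg hn.not_gt

lemma subtermAt_append : ∀ (p q : List ℕ) (t : Term F ar),
    t.subtermAt (p ++ q) = (t.subtermAt p).bind (·.subtermAt q)
  | [], q, t => by rw [List.nil_append, subtermAt_nil, Option.bind_some]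
  | _ :: _, _, var _ => rfl
  | i :: p, q, app f ts => by
    simp only [List.cons_append, subtermAt]
    split
    · exact subtermAt_append p q _
    · rfl

lemma IsSubtermOf.trans {a b c : Term F ar} (hab : a.IsSubtermOf b) (hbc : b.IsSubtermOf c) :
    a.IsSubtermOf c := by
  obtain ⟨p, hp⟩ := hab
  obtain ⟨q, hq⟩ := hbc
  exact ⟨q ++ p, by rw [subtermAt_append, hq, Option.bind_some, hp]⟩

lemma isSubtermOf_arg {f : F} {ts : Fin (ar f) → Term F ar} (i : Fin (ar f)) :
    (ts i).IsSubtermOf (app f ts) :=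
  ⟨[i.val], by rw [subtermAt_cons, subtermAt_nil]⟩

end Term

section SR

variable {G : Type} {arG : G → ℕ} {Rg : TRS G arG}

lemma mem_SR_of_isSubtermOf {s u : Term G arG} (hs : s ∈ SR Rg) (hu : u.IsSubtermOf s) :
    u ∈ SR Rg := by
  obtain ⟨lr, hlr, f, ts, h1, i, h2⟩ := hs
  exact ⟨lr, hlr, f, ts, h1, i, hu.trans h2⟩

lemma lhs_arg_mem_SR {g : G} {ls : Fin (arG g) → Term G arG} {r : Term G arG}
    (h : (Term.app g ls, r) ∈ Rg.rules) (i : Fin (arG g)) : ls i ∈ SR Rg :=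
  ⟨_, h, g, ls, rfl, i, [], Term.subtermAt_nil _⟩

end SR

section LiftC

variable {F : Type} {ar : F → ℕ}

lemma liftC_app {f : F} {ts : Fin (ar f) → Term F ar} :
    liftC (Term.app f ts) = Term.app (Sum.inl f) fun i => liftC (ts i) := rfl

lemma vars_liftC (t : Term F ar) : (liftC t).vars = t.vars := by
  induction t with
  | var n => rfl
  | app f ts ih => exact Finset.biUnion_congr rfl fun i _ => ih i

lemma Term.Ground.liftC {t : Term F ar} (h : t.Ground) : (_root_.liftC t).Ground :=
  (vars_liftC t).trans h

lemma TRS.mem_liftC_rules_app_iff {R : TRS F ar} {f : F}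
    {ls : Fin (ar f) → Term (F ⊕ F) (arC ar)} {r : Term (F ⊕ F) (arC ar)} :
    (Term.app (Sum.inl f) ls, r) ∈ R.liftC.rules ↔
      ∃ ts r₀, (Term.app f ts, r₀) ∈ R.rules ∧ ls = (fun i => _root_.liftC (ts i)) ∧
        r = _root_.liftC r₀ := by
  constructor
  · rintro ⟨⟨l₀, r₀⟩, hlr, heq⟩
    cases l₀ with
    | var n => exact absurd rfl (R.lhs_not_var _ hlr n)
    | app f₀ ts =>
      simp only [Prod.mk.injEq] at heq
      obtain ⟨hl, rfl⟩ := heq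
      change Term.app (Sum.inl f₀) _ = _ at hl
      injection hl with hf hts
      obtain rfl := Sum.inl_injective hf
      exact ⟨ts, r₀, hlr, (eq_of_heq hts).symm, rfl⟩
  · rintro ⟨ts, r₀, hlr, rfl, rfl⟩
    exact ⟨_, hlr, rfl⟩

lemma replaceAt_liftC_cons {f : F} {ts : Fin (ar f) → Term F ar} (i : Fin (ar f))
    (p : List ℕ) (u : Term (F ⊕ F) (arC ar)) :
    (liftC (Term.app f ts)).replaceAt (i.val :: p) u =
      ((liftC (ts i)).replaceAt p u).map fun v =>
        Term.app (Sum.inl f) (Function.update (fun j => liftC (ts j)) i v) :=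
  dif_pos i.isLt

end LiftC

lemma ite_eq_update {α β : Type*} [DecidableEq α] (f g : α → β) (i : α) :
    (fun j => if j = i then g j else f j) = Function.update f i (g i) := by
  funext j
  rcases eq_or_ne j i with rfl | hj <;> simp [*]

section Automata

variable {G : Type} {arG : G → ℕ} {Q : Type} {Γ : Set (TARule G arG Q)}

lemma dn_app {g : G} {ws : Fin (arG g) → Term G arG} :
    dn Γ (Term.app g ws) = oneStep Γ g fun i => dn Γ (ws i) := by
  ext q
  constructor
  · rintro ⟨h1, h2⟩
    exact ⟨_, h1, h2⟩
  · rintro ⟨qs, h1, h2⟩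
    exact Reaches.app h1 h2

lemma dn_app_update {g : G} {ws : Fin (arG g) → Term G arG} {i : Fin (arG g)} {v : Term G arG} :
    dn Γ (Term.app g (Function.update ws i v)) =
      oneStep Γ g (Function.update (fun j => dn Γ (ws j)) i (dn Γ v)) := by
  rw [dn_app]
  congr 1
  funext j
  exact Function.apply_update (fun _ => dn Γ) ws i v j

lemma oneStep_mono {g : G} {Ss Ss' : Fin (arG g) → Set Q} (h : ∀ i, Ss i ⊆ Ss' i) :
    oneStep Γ g Ss ⊆ oneStep Γ g Ss' := fun _ ⟨qs, h1, h2⟩ => ⟨qs, fun i => h i (h1 i), h2⟩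

lemma mem_oneStep_update_iff {g : G} {Ss : Fin (arG g) → Set Q} {i : Fin (arG g)}
    {A : Set Q} {q : Q} :
    q ∈ oneStep Γ g (Function.update Ss i A) ↔
      ∃ a ∈ A, q ∈ oneStep Γ g (Function.update Ss i {a}) := by
  constructor
  · rintro ⟨qs, hqs, hρ⟩
    refine ⟨qs i, by simpa using hqs i, qs, fun j => ?_, hρ⟩
    rcases eq_or_ne j i with rfl | hj
    · simp
    · simpa [hj] using hqs j
  · rintro ⟨a, ha, h⟩
    refine oneStep_mono (fun j => ?_) h
    rcases eq_or_ne j i with rfl | hj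
    · simpa using ha
    · simp [hj]

lemma ReachesT.target_mem {θ : ℕ → Q} {r : Term G arG} {q : Q} {W : Set Q}
    (h : ReachesT Γ θ r q) (hΓ : ∀ ρ ∈ Γ, ρ.2.2 ∈ W) (hθ : ∀ n ∈ r.vars, θ n ∈ W) :
    q ∈ W := by
  cases h with
  | var n => exact hθ n (Finset.mem_singleton_self n)
  | app _ hρ => exact hΓ _ hρ

end Automata

section MarkedRedex

variable {F : Type} {ar : F → ℕ} {Q : Type} (R : TRS F ar)
  (Γ : Set (TARule (F ⊕ F) (arC ar) Q))

/-- `s[(s|_p)°]_p↓` if `p ∈ ℛ(s)`, and `∅` otherwise. -/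
def markedRedexDn (s : Term F ar) (p : List ℕ) : Set Q :=
  { q | ∃ u v, s.subtermAt p = some u ∧ R.IsRedex u ∧
      (liftC s).replaceAt p (circTm u) = some v ∧ Reaches Γ v q }

/-- The set `Pᵢ` of states of the `i`-th argument that some state of `P` is built on. -/
def markedArgStates (P : Set Q) (f : F) (ts : Fin (ar f) → Term F ar) (i : Fin (ar f)) :
    Set Q :=
  { a | (∃ p, a ∈ markedRedexDn R Γ (ts i) p) ∧
      (P ∩ oneStep Γ (Sum.inl f) (Function.update (fun j => dn Γ (liftC (ts j))) i {a})).Nonempty }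

variable {R Γ}

lemma markedRedexDn_nil (s : Term F ar) :
    markedRedexDn R Γ s [] = { q | R.IsRedex s ∧ q ∈ dn Γ (circTm s) } := by
  ext q
  simp [markedRedexDn, Term.subtermAt_nil, Term.replaceAt_nil, dn]

lemma markedRedexDn_cons {f : F} {ts : Fin (ar f) → Term F ar} (i : Fin (ar f)) (p : List ℕ) :
    markedRedexDn R Γ (Term.app f ts) (i.val :: p) =
      oneStep Γ (Sum.inl f)
        (Function.update (fun j => dn Γ (liftC (ts j))) i (markedRedexDn R Γ (ts i) p)) := by
  ext q
  constructor
  · rintro ⟨u, v, hu, hred, hv, hq⟩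
    rw [Term.subtermAt_cons] at hu
    rw [replaceAt_liftC_cons, Option.map_eq_some_iff] at hv
    obtain ⟨vi, hvi, rfl⟩ := hv
    obtain ⟨a, ha, hqa⟩ := mem_oneStep_update_iff.1 (dn_app_update.subset hq)
    exact mem_oneStep_update_iff.2 ⟨a, ⟨u, vi, hu, hred, hvi, ha⟩, hqa⟩
  · intro hq
    obtain ⟨a, ⟨u, vi, hu, hred, hvi, ha⟩, hqa⟩ := mem_oneStep_update_iff.1 hq
    refine ⟨u, Term.app (Sum.inl f) (Function.update (fun j => liftC (ts j)) i vi),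
      by rwa [Term.subtermAt_cons], hred, ?_, ?_⟩
    · rw [replaceAt_liftC_cons, hvi, Option.map_some]
    · exact dn_app_update.superset (mem_oneStep_update_iff.2 ⟨a, ha, hqa⟩)

lemma markedRedexDn_cons_of_le {f : F} {ts : Fin (ar f) → Term F ar} {n : ℕ} (hn : ar f ≤ n)
    (p : List ℕ) : markedRedexDn R Γ (Term.app f ts) (n :: p) = ∅ := by
  ext q
  simp [markedRedexDn, Term.subtermAt_cons_of_le hn]

lemma markedArgStates_meets {P : Set Q} {f : F} {ts : Fin (ar f) → Term F ar}
    (hmeet : ∀ p, R.RedexPos (Term.app f ts) p →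
      (P ∩ markedRedexDn R Γ (Term.app f ts) p).Nonempty)
    (i : Fin (ar f)) {p : List ℕ} (hp : R.RedexPos (ts i) p) :
    (markedArgStates R Γ P f ts i ∩ markedRedexDn R Γ (ts i) p).Nonempty := by
  obtain ⟨u, hu, hred⟩ := hp
  obtain ⟨q, hqP, hq⟩ := hmeet (i.val :: p) ⟨u, by rwa [Term.subtermAt_cons], hred⟩
  rw [markedRedexDn_cons] at hq
  obtain ⟨a, ha, hqa⟩ := mem_oneStep_update_iff.1 hq
  exact ⟨a, ⟨⟨p, ha⟩, q, hqP, hqa⟩, ha⟩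

lemma markedArgStates_union_root {P : Set Q} {f : F} {ts : Fin (ar f) → Term F ar}
    (hsub : ∀ q ∈ P, ∃ p, q ∈ markedRedexDn R Γ (Term.app f ts) p) :
    (P ∩ ⋃ i, oneStep Γ (Sum.inl f) (Function.update (fun j => dn Γ (liftC (ts j))) i
        (markedArgStates R Γ P f ts i))) ∪
      { q ∈ P | R.IsRedex (Term.app f ts) ∧
        q ∈ oneStep Γ (Sum.inr f) fun j => dn Γ (liftC (ts j)) } = P := by
  refine Set.Subset.antisymm (Set.union_subset Set.inter_subset_left fun q hq => hq.1)
    fun q hq => ?_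
  obtain ⟨p, hqp⟩ := hsub q hq
  rcases p with _ | ⟨n, p⟩
  · rw [markedRedexDn_nil] at hqp
    obtain ⟨hred, hqr⟩ := hqp
    change q ∈ dn Γ (Term.app (Sum.inr f) _) at hqr
    rw [dn_app] at hqr
    exact Or.inr ⟨hq, hred, hqr⟩
  · rcases lt_or_ge n (ar f) with hn | hn
    · rw [show n = (⟨n, hn⟩ : Fin (ar f)).val from rfl, markedRedexDn_cons] at hqp
      obtain ⟨a, ha, hqa⟩ := mem_oneStep_update_iff.1 hqp
      exact Or.inl ⟨hq, Set.mem_iUnion.2 ⟨⟨n, hn⟩,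
        mem_oneStep_update_iff.2 ⟨a, ⟨⟨p, ha⟩, q, hq, hqa⟩, hqa⟩⟩⟩
    · rw [markedRedexDn_cons_of_le hn] at hqp
      exact hqp.elim

end MarkedRedex

section DTransRS

variable {F : Type} {ar : F → ℕ} {Q : Type} {R : TRS F ar}
  {Γ : Set (TARule (F ⊕ F) (arC ar) Q)} {enc2 : Term (F ⊕ F) (arC ar) → Q}

lemma mem_DTransRS {P : Set Q} {f : F} {ts : Fin (ar f) → Term F ar}
    (hmatch : LhsMatch R.liftC enc2 (Sum.inl f) (fun i => dn Γ (liftC (ts i))) ↔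
      R.IsRedex (Term.app f ts))
    (hsub : ∀ q ∈ P, ∃ p, q ∈ markedRedexDn R Γ (Term.app f ts) p)
    (hmeet : ∀ p, R.RedexPos (Term.app f ts) p →
      (P ∩ markedRedexDn R Γ (Term.app f ts) p).Nonempty) :
    (⟨f, fun i => (dn Γ (liftC (ts i)), markedArgStates R Γ P f ts i),
      (dn Γ (liftC (Term.app f ts)), P)⟩ : TARule F ar (Set Q × Set Q)) ∈
      DTransRS R.liftC Γ enc2 := by
  refine ⟨f, fun i => (dn Γ (liftC (ts i)), markedArgStates R Γ P f ts i),
    P ∩ ⋃ i, oneStep Γ (Sum.inl f)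
      (Function.update (fun j => dn Γ (liftC (ts j))) i (markedArgStates R Γ P f ts i)),
    { q ∈ P | R.IsRedex (Term.app f ts) ∧
      q ∈ oneStep Γ (Sum.inr f) fun j => dn Γ (liftC (ts j)) }, ?_, fun i a ha => ?_, ?_, ?_⟩
  · simp only [ite_eq_update]
    exact Set.inter_subset_right
  · obtain ⟨q, hqP, hqa⟩ := ha.2
    simp only [ite_eq_update]
    exact ⟨q, ⟨hqP, Set.mem_iUnion.2 ⟨i, mem_oneStep_update_iff.2 ⟨a, ha, hqa⟩⟩⟩, hqa⟩
  · by_cases hred : R.IsRedex (Term.app f ts)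
    · obtain ⟨q, hqP, hq⟩ := hmeet [] ⟨_, Term.subtermAt_nil _, hred⟩
      rw [markedRedexDn_nil] at hq
      refine Or.inl ⟨hmatch.2 hred, ⟨q, hqP, hred, dn_app.subset hq.2⟩, fun q hq => hq.2.2⟩
    · exact Or.inr ⟨mt hmatch.1 hred, by simp [hred]⟩
  · rw [markedArgStates_union_root hsub, liftC_app, dn_app]

theorem reaches_DTransRS
    (hmatch : ∀ (f : F) (ts : Fin (ar f) → Term F ar), (∀ i, (ts i).Ground) →
      (LhsMatch R.liftC enc2 (Sum.inl f) (fun i => dn Γ (liftC (ts i))) ↔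
        R.IsRedex (Term.app f ts)))
    {s : Term F ar} (hs : s.Ground) {P : Set Q}
    (hsub : ∀ q ∈ P, ∃ p, q ∈ markedRedexDn R Γ s p)
    (hmeet : ∀ p, R.RedexPos s p → (P ∩ markedRedexDn R Γ s p).Nonempty) :
    Reaches (DTransRS R.liftC Γ enc2) s (dn Γ (liftC s), P) := by
  induction s generalizing P with
  | var n => exact absurd hs (Term.not_ground_var n)
  | app f ts ih =>
    exact Reaches.app
      (fun i => ih i (hs.arg i) (fun _ ha => ha.1) fun _ hp => markedArgStates_meets hmeet i hp)
      (mem_DTransRS (hmatch f ts hs.arg) hsub hmeet)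

end DTransRS

lemma CSetup.target_mem_Qstates {G : Type} [Fintype G] {arG : G → ℕ} {Q : Type} [Fintype Q]
    {Rg : TRS G arG} {T : Set (Term G arG)} (C : CSetup Q Rg T) {ρ : TARule G arG Q}
    (hρ : ρ ∈ C.Γsat) : ρ.2.2 ∈ C.Qstates := by
  have hiter : ∀ n, ∀ ρ ∈ (satStep Rg C.enc C.Qstates)^[n] C.Γ0, ρ.2.2 ∈ C.Qstates := by
    intro n
    induction n with
    | zero =>
      rintro ρ (h | ⟨f, ts, hSR, rfl⟩ | ⟨f, rfl⟩)
      · exact Or.inl (C.hAstates ρ h).1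
      · exact Or.inr ⟨_, Or.inl ⟨_, hSR, rfl⟩, rfl⟩
      · exact Or.inr ⟨_, Or.inr rfl, rfl⟩
    | succ n ih =>
      rw [Function.iterate_succ_apply']
      rintro ρ (h | ⟨f, ls, r, θ, q, -, hθ, hr, rfl⟩)
      · exact ih ρ h
      · exact hr.target_mem ih hθ
  obtain ⟨n, hn⟩ := Set.mem_iUnion.1 hρ
  exact hiter n ρ hn

namespace CrsSetup

variable {F : Type} [Fintype F] {ar : F → ℕ} {Q : Type} [Fintype Q] {R S : TRS F ar}
  (C : CrsSetup Q R S)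

lemma BProp_subset_Γ' : BProp C.enc ⊆ C.Γ' :=
  fun _ h => Or.inl (Or.inl (Set.mem_iUnion.2 ⟨0, Or.inr (Or.inr h)⟩))

lemma BMatch_enc2_subset_Γ' : BMatch R.liftC C.enc2 ⊆ C.Γ' :=
  fun _ h => Or.inl (Or.inr h)

lemma reaches_enc_var_zero {t : Term (F ⊕ F) (arC ar)} (ht : t.Ground) :
    Reaches C.Γ' t (C.enc (Term.var 0)) := by
  induction t with
  | var n => exact absurd ht (Term.not_ground_var n)
  | app g ws ih => exact Reaches.app (fun i => ih i (ht.arg i)) (C.BProp_subset_Γ' ⟨g, rfl⟩)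

lemma reaches_enc2_subst {t : Term F ar} (ht : liftC t ∈ SR R.liftC) {σ : ℕ → Term F ar}
    (hg : (t.subst σ).Ground) :
    Reaches C.Γ' (liftC (t.subst σ)) (C.enc2 (stPattern (liftC t))) := by
  induction t with
  | var n =>
    rw [show stPattern (liftC (Term.var n : Term F ar)) = Term.var 0 from rfl, C.hx]
    exact C.reaches_enc_var_zero hg.liftC
  | app g us ih =>
    exact Reaches.app
      (fun i => ih i (mem_SR_of_isSubtermOf ht
        (Term.isSubtermOf_arg (f := Sum.inl g) (ts := fun j => liftC (us j)) i)) (hg.arg i))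
      (C.BMatch_enc2_subset_Γ' ⟨Sum.inl g, _, ht, rfl⟩)

/-- The states `⟪t⟫`, `t` not a variable, are fresh: only matching rules reach them. -/
lemma mem_BMatch_of_target_eq {g : F ⊕ F} {us : Fin (arC ar g) → Term (F ⊕ F) (arC ar)}
    (hSR : Term.app g us ∈ SR R.liftC) {ρ : TARule (F ⊕ F) (arC ar) Q} (hρ : ρ ∈ C.Γ')
    (ht : ρ.2.2 = C.enc2 (Term.app g us)) : ρ ∈ BMatch R.liftC C.enc2 := by
  have hfresh : C.enc2 (Term.app g us) ∈ C.enc2 '' (BStateSet R.liftC \ {Term.var 0}) :=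
    ⟨_, ⟨Or.inl ⟨_, hSR, rfl⟩, fun h => nomatch h⟩, rfl⟩
  rcases hρ with (h | h) | h
  · exact (Set.eq_empty_iff_forall_notMem.1 C.hfresh2 _
      ⟨hfresh, ht ▸ C.toCSetup.target_mem_Qstates h⟩).elim
  · exact h
  · exact (Set.eq_empty_iff_forall_notMem.1 C.hEfresh _
      ⟨⟨ρ, h, Or.inl ht⟩, Or.inr hfresh⟩).elim

lemma eq_of_target_eq {g : F ⊕ F} {us : Fin (arC ar g) → Term (F ⊕ F) (arC ar)}
    (hSR : Term.app g us ∈ SR R.liftC) {ρ : TARule (F ⊕ F) (arC ar) Q} (hρ : ρ ∈ C.Γ')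
    (ht : ρ.2.2 = C.enc2 (Term.app g us)) :
    ρ = ⟨g, fun i => C.enc2 (stPattern (us i)), C.enc2 (Term.app g us)⟩ := by
  obtain ⟨g', us', hSR', rfl⟩ := C.mem_BMatch_of_target_eq hSR hρ ht
  have heq := C.henc2 (Or.inl ⟨_, hSR', rfl⟩) (Or.inl ⟨_, hSR, rfl⟩) ht
  injection heq with hg hus
  subst hg
  obtain rfl := eq_of_heq hus
  rfl

lemma exists_subst_of_reaches_enc2 {t : Term F ar} (hlin : t.Linear)
    (ht : liftC t ∈ SR R.liftC) {w : Term F ar}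
    (hw : Reaches C.Γ' (liftC w) (C.enc2 (stPattern (liftC t)))) : ∃ σ, w = t.subst σ := by
  induction t generalizing w with
  | var n => exact ⟨fun _ => w, rfl⟩
  | app g us ih =>
    cases w with
    | var m => cases hw
    | app g' ws =>
      obtain ⟨hargs, hρ⟩ := hw
      obtain ⟨hg, hqs⟩ := Sigma.mk.inj_iff.1 (C.eq_of_target_eq ht hρ rfl)
      obtain rfl := (Sum.inl_injective hg).symm
      obtain rfl := congrArg Prod.fst (eq_of_heq hqs)
      obtain ⟨σ, hσ⟩ := hlin.exists_subst_app fun i => ih i (hlin.arg i)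
        (mem_SR_of_isSubtermOf ht
          (Term.isSubtermOf_arg (f := Sum.inl g) (ts := fun j => liftC (us j)) i)) (hargs i)
      exact ⟨σ, hσ⟩

lemma lhsMatch_iff_isRedex (hR : R.LeftLinear) {f : F} {ts : Fin (ar f) → Term F ar}
    (hts : ∀ i, (ts i).Ground) :
    LhsMatch R.liftC C.enc2 (Sum.inl f) (fun i => dn C.Γ' (liftC (ts i))) ↔
      R.IsRedex (Term.app f ts) := by
  constructor
  · rintro ⟨ls, r, hrule, hls⟩
    obtain ⟨us, r₀, hlr, rfl, -⟩ := TRS.mem_liftC_rules_app_iff.1 hrule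
    have hlin : (Term.app f us).Linear := hR _ hlr
    obtain ⟨σ, hσ⟩ := hlin.exists_subst_app fun i =>
      C.exists_subst_of_reaches_enc2 (hlin.arg i) (lhs_arg_mem_SR hrule i) (hls i)
    exact ⟨_, hlr, σ, hσ⟩
  · rintro ⟨⟨l, r⟩, hlr, σ, hl⟩
    cases l with
    | var n => exact absurd rfl (R.lhs_not_var _ hlr n)
    | app f₀ us =>
      injection hl with hf hus
      subst hf
      obtain rfl := eq_of_heq hus
      have hrule := TRS.mem_liftC_rules_app_iff.2 ⟨us, r, hlr, rfl, rfl⟩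
      exact ⟨_, _, hrule, fun i => C.reaches_enc2_subst (lhs_arg_mem_SR hrule i) (hts i)⟩

end CrsSetup

theorem statement16_general {F : Type} [Fintype F] {ar : F → ℕ} {Q : Type} [Fintype Q]
    (R S : TRS F ar) (hRlin : R.IsLinear)
    (C : CrsSetup Q R S)
    (s : Term F ar) (hs : s.Ground) (P : Set Q)
    (hsub : ∀ q ∈ P, ∃ p u, s.subtermAt p = some u ∧ R.IsRedex u ∧
        ∃ v, (liftC s).replaceAt p (circTm u) = some v ∧ Reaches C.Γ' v q)
    (hmeet : ∀ p u, s.subtermAt p = some u → R.IsRedex u →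
        ∃ v, (liftC s).replaceAt p (circTm u) = some v ∧ ∃ q ∈ P, Reaches C.Γ' v q) :
    Reaches (DTransRS R.liftC C.Γ' C.enc2) s (dn C.Γ' (liftC s), P) := by
  refine reaches_DTransRS (fun f ts hts => C.lhsMatch_iff_isRedex hRlin.1 hts) hs ?_ ?_
  · intro q hq
    obtain ⟨p, u, hu, hred, v, hv, hq⟩ := hsub q hq
    exact ⟨p, u, v, hu, hred, hv, hq⟩
  · rintro p ⟨u, hu, hred⟩
    obtain ⟨v, hv, q, hqP, hq⟩ := hmeet p u hu hred
    exact ⟨q, hqP, u, v, hu, hred, hv, hq⟩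

/-- Let `ℛ` and `𝒮` be linear growing TRSs over `𝓕` and `𝒟'(ℛ,𝒮)`
the powerset-pair automaton built from `𝒞'_{RS_{𝒮°}}(ℛ)`.  Let `s ∈ 𝒯(𝓕)` and let
`P ⊆ ⋃_{p ∈ ℛ(s)} s[(s|_p)°]_p↓` be such that `P ∩ s[(s|_p)°]_p↓ ≠ ∅` for every
redex position `p` of `s`.  Then `s →_{Γ_{𝒟'}}* [S,P]` with `S = s↓`. -/
theorem statement16 {F : Type} [Fintype F] {ar : F → ℕ} {Q : Type} [Fintype Q]
    (R S : TRS F ar) (hRlin : R.IsLinear) (hRgrow : R.Growing)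
    (hSlin : S.IsLinear) (hSgrow : S.Growing)
    (C : CrsSetup Q R S)
    (s : Term F ar) (hs : s.Ground) (P : Set Q)
    (hsub : ∀ q ∈ P, ∃ p u, s.subtermAt p = some u ∧ R.IsRedex u ∧
        ∃ v, (liftC s).replaceAt p (circTm u) = some v ∧ Reaches C.Γ' v q)
    (hmeet : ∀ p u, s.subtermAt p = some u → R.IsRedex u →
        ∃ v, (liftC s).replaceAt p (circTm u) = some v ∧ ∃ q ∈ P, Reaches C.Γ' v q) :
    Reaches (DTransRS R.liftC C.Γ' C.enc2) s (dn C.Γ' (liftC s), P) :=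
  statement16_general R S hRlin C s hs P hsub hmeet
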